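/- arXiv:0902.1123 — 5 statements merged into one kernel-verified Lean document; each statement's English description precedes it below -/
import Mathlib

section
/- Let h : ℂ × ℝ × ℝ → ℂ, written h(z;x,t), and let z₀ ∈ ℂ, (x_b,t_b) ∈ ℝ². Assume: (i) for every (x,t) in a neighborhood of (x_b,t_b), the map z ↦ h(z;x,t) is holomorphic on a fixed neighborhood of z₀, with complex z-derivatives h' and h''; (ii) the map (u,v,x,t) ↦ (h(u+iv;x,t), h'(u+iv;x,t)) is continuously differentiable as a map from an open subset of ℝ⁴ into ℂ² ≅ ℝ⁴ near (Re z₀, Im z₀, x_b, t_b); (iii) h'(z₀;x_b,t_b) = 0; (iv) Im h(z₀;x_b,t_b) = 0; (v) h''(z₀;x_b,t_b) ≠ 0; (vi) Im h_t(z₀;x_b,t_b) ≠ 0, where h_t denotes the partial derivative of h in t. Then there exist ε > 0 and continuously differentiable functions ζ : (x_b−ε, x_b+ε) → ℂ and τ : (x_b−ε, x_b+ε) → ℝ with ζ(x_b) = z₀ and τ(x_b) = t_b, such that h'(ζ(x); x, τ(x)) = 0 and Im h(ζ(x); x, τ(x)) = 0 for all x with |x − x_b| < ε; moreover there is a neighborhood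 U of (z₀, x_b, t_b) in ℂ × ℝ × ℝ such that every (z,x,t) ∈ U with h'(z;x,t) = 0 and Im h(z;x,t) = 0 satisfies z = ζ(x) and t = τ(x). -/
/-!
The system `h' = 0`, `Im h = 0` consists of three real equations in the unknowns `(z, t)`, with
`x` as parameter. At the breaking point its Jacobian in `(z, t)` is block triangular: by
holomorphy the `z`-derivative of `h'` is multiplication by `h''(z₀)`, the `z`-derivative of
`Im h` is `δz ↦ Im (h'(z₀) δz) = 0`, and the `t`-derivative of `Im h` is `Im h_t(z₀)`. Its
determinant `|h''(z₀)|² Im h_t(z₀)` is nonzero, so the implicit function theorem gives the curve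
`x ↦ (ζ(x), τ(x))` and its local uniqueness.
-/

open Complex Filter Topology Set

theorem LinearMap.injective_of_blockTriangular {R M₁ M₂ N₁ N₂ : Type*} [Ring R]
    [AddCommGroup M₁] [Module R M₁] [AddCommGroup M₂] [Module R M₂]
    [AddCommGroup N₁] [Module R N₁] [AddCommGroup N₂] [Module R N₂]
    (D : M₁ × M₂ →ₗ[R] N₁ × N₂) (hD₂₁ : ∀ a, (D (a, 0)).2 = 0)
    (hD₁₁ : ∀ a, D (a, 0) = 0 → a = 0) (hD₂₂ : ∀ b, (D (0, b)).2 = 0 → b = 0) :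
    Function.Injective D := by
  refine (injective_iff_map_eq_zero D).mpr fun ⟨a, b⟩ hab => ?_
  have hsplit : D (a, b) = D (a, 0) + D (0, b) := by
    rw [← map_add, Prod.mk_add_mk, add_zero, zero_add]
  have hb : b = 0 := hD₂₂ b (by simpa [hD₂₁, hab] using (congrArg Prod.snd hsplit).symm)
  subst hb
  rw [hD₁₁ a hab]
  rfl

theorem ContinuousLinearMap.isInvertible_of_injective {𝕜 V : Type*} [NontriviallyNormedField 𝕜]
    [CompleteSpace 𝕜] [NormedAddCommGroup V] [NormedSpace 𝕜 V] [FiniteDimensional 𝕜 V]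
    (f : V →L[𝕜] V) (hf : Function.Injective f) : f.IsInvertible :=
  ⟨(LinearEquiv.ofInjectiveEndo (f : V →ₗ[𝕜] V) hf).toContinuousLinearEquiv, rfl⟩

theorem ContDiffAt.exists_contDiffOn_implicitCurve {E F : Type*}
    [NormedAddCommGroup E] [NormedSpace ℝ E] [CompleteSpace E]
    [NormedAddCommGroup F] [NormedSpace ℝ F] [CompleteSpace F]
    {f : ℝ × E → F} {u : ℝ × E} {n : ℕ} (hf : ContDiffAt ℝ n f u) (hn : n ≠ 0)
    (hf' : (fderiv ℝ f u ∘L .inr ℝ ℝ E).IsInvertible) :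
    ∃ ε > (0 : ℝ), ∃ γ : ℝ → E, ContDiffOn ℝ n γ (Ioo (u.1 - ε) (u.1 + ε)) ∧ γ u.1 = u.2 ∧
      (∀ x ∈ Ioo (u.1 - ε) (u.1 + ε), f (x, γ x) = f u) ∧
      ∀ᶠ v in 𝓝 u, f v = f u → v.2 = γ v.1 := by
  have hn' : (n : WithTop ℕ∞) ≠ 0 := by exact_mod_cast hn
  set γ := hf.implicitFunction hn' hf'
  have hnear : ∀ᶠ x in 𝓝 u.1, ContDiffAt ℝ n γ x ∧ f (x, γ x) = f u :=
    ((hf.contDiffAt_implicitFunction hn' hf').eventually (by simp)).and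
      (hf.eventually_apply_implicitFunction hn' hf')
  obtain ⟨ε, hε, hball⟩ := Metric.eventually_nhds_iff_ball.mp hnear
  rw [Real.ball_eq_Ioo] at hball
  refine ⟨ε, hε, γ, fun x hx => (hball x hx).1.contDiffWithinAt,
    hf.implicitFunction_apply_self hn' hf', fun x hx => (hball x hx).2, ?_⟩
  filter_upwards [hf.eventually_apply_eq_iff_implicitFunction hn' hf'] with v hv hfv
  exact (hv.mp hfv).symm

section BreakingSystem

variable (h h' : ℂ → ℝ → ℝ → ℂ)

def breakingSystem (p : ℝ × ℂ × ℝ) : ℂ × ℝ :=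
  (h' p.2.1 p.1 p.2.2, (h p.2.1 p.1 p.2.2).im)

theorem breakingSystem_eq_zero_iff (x t : ℝ) (z : ℂ) :
    breakingSystem h h' (x, z, t) = 0 ↔ h' z x t = 0 ∧ (h z x t).im = 0 := by
  simp [breakingSystem, Prod.ext_iff]

variable {h h'}

theorem contDiffAt_breakingSystem {n : WithTop ℕ∞} {z₀ : ℂ} {x₀ t₀ : ℝ}
    (hC : ContDiffAt ℝ n
      (fun q : ℝ × ℝ × ℝ × ℝ =>
        (h (q.1 + q.2.1 * I) q.2.2.1 q.2.2.2, h' (q.1 + q.2.1 * I) q.2.2.1 q.2.2.2))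
      (z₀.re, z₀.im, x₀, t₀)) :
    ContDiffAt ℝ n (breakingSystem h h') (x₀, z₀, t₀) := by
  have hre : ContDiff ℝ n re := reCLM.contDiff
  have him : ContDiff ℝ n im := imCLM.contDiff
  have hcoord : ContDiff ℝ n fun p : ℝ × ℂ × ℝ => (p.2.1.re, p.2.1.im, p.1, p.2.2) := by
    fun_prop
  have hproj : ContDiff ℝ n fun w : ℂ × ℂ => (w.2, w.1.im) := by fun_prop
  convert hproj.contDiffAt.comp _ (hC.comp (x₀, z₀, t₀) hcoord.contDiffAt) using 1
  ext p <;> simp [breakingSystem, re_add_im]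

theorem isInvertible_fderiv_breakingSystem_comp_inr
    {h'' : ℂ → ℝ → ℝ → ℂ} {z₀ ht : ℂ} {x₀ t₀ : ℝ}
    (hf : DifferentiableAt ℝ (breakingSystem h h') (x₀, z₀, t₀))
    (hd : HasDerivAt (fun w => h w x₀ t₀) (h' z₀ x₀ t₀) z₀)
    (hd' : HasDerivAt (fun w => h' w x₀ t₀) (h'' z₀ x₀ t₀) z₀)
    (hdt : HasDerivAt (fun t => h z₀ x₀ t) ht t₀)
    (hcrit : h' z₀ x₀ t₀ = 0) (hnd : h'' z₀ x₀ t₀ ≠ 0) (hht : ht.im ≠ 0) :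
    (fderiv ℝ (breakingSystem h h') (x₀, z₀, t₀) ∘L .inr ℝ ℝ (ℂ × ℝ)).IsInvertible := by
  set D := fderiv ℝ (breakingSystem h h') (x₀, z₀, t₀) ∘L .inr ℝ ℝ (ℂ × ℝ)
  have hD : HasFDerivAt (fun y => breakingSystem h h' (x₀, y)) D (z₀, t₀) :=
    hf.hasFDerivAt.comp _ (hasFDerivAt_prodMk_right x₀ (z₀, t₀))
  have hDz : ∀ δ : ℂ, D (δ, 0) = (h'' z₀ x₀ t₀ * δ, 0) := by
    have hslice : HasFDerivAt (fun z => breakingSystem h h' (x₀, z, t₀)) (D ∘L .inl ℝ ℂ ℝ) z₀ :=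
      hD.comp (f := fun z => (z, t₀)) z₀ (hasFDerivAt_prodMk_left z₀ t₀)
    have hholo : HasFDerivAt (fun z => breakingSystem h h' (x₀, z, t₀))
        (((ContinuousLinearMap.toSpanSingleton ℂ (h'' z₀ x₀ t₀)).restrictScalars ℝ).prod
          (imCLM ∘L (ContinuousLinearMap.toSpanSingleton ℂ (h' z₀ x₀ t₀)).restrictScalars ℝ))
        z₀ :=
      (hd'.hasFDerivAt.restrictScalars ℝ).prodMk
        (imCLM.hasFDerivAt.comp z₀ (hd.hasFDerivAt.restrictScalars ℝ))
    intro δ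
    simpa [hcrit, mul_comm] using congrArg (· δ) (hslice.unique hholo)
  have hDt : (D (0, 1)).2 = ht.im := by
    have hslice : HasDerivAt (fun t => breakingSystem h h' (x₀, z₀, t)) (D (0, 1)) t₀ :=
      (hD.comp t₀ (hasFDerivAt_prodMk_right z₀ t₀)).hasDerivAt
    exact ((ContinuousLinearMap.snd ℝ ℂ ℝ).hasFDerivAt.comp_hasDerivAt t₀ hslice).unique
      (imCLM.hasFDerivAt.comp_hasDerivAt t₀ hdt)
  refine D.isInvertible_of_injective (LinearMap.injective_of_blockTriangular D.toLinearMap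
    (fun δ => by simp [hDz]) (fun δ hδ => ?_) (fun b hb => ?_))
  · simpa [hDz, hnd] using hδ
  · have hb_smul : D (0, b) = b • D (0, 1) := by
      rw [← map_smul, Prod.smul_mk, smul_zero, smul_eq_mul, mul_one]
    simpa [hb_smul, hDt, hht] using hb

end BreakingSystem

/-- Theorem 4.2 and Corollary 4.3 of the paper: through a regular nondegenerate breaking
point `(x_b, t_b)` with corresponding double point `z₀` in the spectral plane, there pass
unique continuously differentiable curves `x ↦ ζ(x)` (the motion of the double point) and
`x ↦ τ(x)` (the breaking curve `t = τ(x)`), solving the system `h'(z;x,t) = 0`,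
`Im h(z;x,t) = 0`, and these are locally the only solutions. -/
theorem breaking_curve_exists_unique
    (h h' h'' : ℂ → ℝ → ℝ → ℂ) (z₀ : ℂ) (x_b t_b : ℝ)
    -- (i) holomorphy in z near z₀, locally uniformly in (x,t) near (x_b,t_b)
    (V : Set (ℝ × ℝ)) (hV : V ∈ nhds (x_b, t_b)) (U : Set ℂ) (hU : U ∈ nhds z₀)
    (hder : ∀ p ∈ V, ∀ z ∈ U,
      HasDerivAt (fun w => h w p.1 p.2) (h' z p.1 p.2) z ∧
      HasDerivAt (fun w => h' w p.1 p.2) (h'' z p.1 p.2) z)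
    -- (ii) C¹ regularity in all four real variables of (h, h')
    (hC1 : ContDiffAt ℝ 1
      (fun q : ℝ × ℝ × ℝ × ℝ =>
        (h (q.1 + q.2.1 * I) q.2.2.1 q.2.2.2, h' (q.1 + q.2.1 * I) q.2.2.1 q.2.2.2))
      (z₀.re, z₀.im, x_b, t_b))
    -- (iii) h'(z₀; x_b, t_b) = 0
    (hcrit : h' z₀ x_b t_b = 0)
    -- (iv) Im h(z₀; x_b, t_b) = 0
    (him : (h z₀ x_b t_b).im = 0)
    -- (v) nondegeneracy: h''(z₀; x_b, t_b) ≠ 0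
    (hnd : h'' z₀ x_b t_b ≠ 0)
    -- (vi) Im h_t(z₀; x_b, t_b) ≠ 0
    (ht : ℂ) (hdt : HasDerivAt (fun t => h z₀ x_b t) ht t_b) (hht : ht.im ≠ 0) :
    ∃ ε > (0:ℝ), ∃ ζ : ℝ → ℂ, ∃ τ : ℝ → ℝ,
      ContDiffOn ℝ 1 ζ (Set.Ioo (x_b - ε) (x_b + ε)) ∧
      ContDiffOn ℝ 1 τ (Set.Ioo (x_b - ε) (x_b + ε)) ∧
      ζ x_b = z₀ ∧ τ x_b = t_b ∧
      (∀ x ∈ Set.Ioo (x_b - ε) (x_b + ε),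
        h' (ζ x) x (τ x) = 0 ∧ (h (ζ x) x (τ x)).im = 0) ∧
      ∃ W ∈ nhds ((z₀, x_b, t_b) : ℂ × ℝ × ℝ),
        ∀ p ∈ W, h' p.1 p.2.1 p.2.2 = 0 → (h p.1 p.2.1 p.2.2).im = 0 →
          p.1 = ζ p.2.1 ∧ p.2.2 = τ p.2.1 := by
  obtain ⟨hd, hd'⟩ := hder _ (mem_of_mem_nhds hV) _ (mem_of_mem_nhds hU)
  have hF := contDiffAt_breakingSystem hC1
  have hF₀ : breakingSystem h h' (x_b, z₀, t_b) = 0 :=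
    (breakingSystem_eq_zero_iff h h' x_b t_b z₀).mpr ⟨hcrit, him⟩
  obtain ⟨ε, hε, γ, hγ, hγ₀, hγF, hγuniq⟩ := hF.exists_contDiffOn_implicitCurve one_ne_zero
    (isInvertible_fderiv_breakingSystem_comp_inr (hF.differentiableAt one_ne_zero)
      hd hd' hdt hcrit hnd hht)
  rw [hF₀] at hγF hγuniq
  refine ⟨ε, hε, fun x => (γ x).1, fun x => (γ x).2, hγ.fst, hγ.snd,
    congrArg Prod.fst hγ₀, congrArg Prod.snd hγ₀,
    fun x hx => (breakingSystem_eq_zero_iff h h' _ _ _).mp (hγF x hx), ?_⟩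
  have hnear := ((by fun_prop : Continuous fun p : ℂ × ℝ × ℝ => (p.2.1, p.1, p.2.2)).tendsto
    (z₀, x_b, t_b)).eventually hγuniq
  exact ⟨_, hnear, fun p hp hp' hp'' =>
    Prod.ext_iff.mp (hp ((breakingSystem_eq_zero_iff h h' _ _ _).mpr ⟨hp', hp''⟩))⟩
end

section
/- Let a and b be real numbers, α = a + i·b, and let z be a complex number. Let w be a complex number with w ≠ 0 and w² = (z − α)(z − conj(α)). Define h_{xz} = −(z − a)/w and h_{tz} = −2(z² − a²)/w − 2w. Then Im( conj(h_{xz}) · h_{tz} ) = 2·(Im z)·( 2|z − a|² − b² ) / |w|². -/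
/-! Since `w² = (z - a)² + b²`, one has `h_tz = -2 (2z(z - a) + b²) / w`, so
`conj h_xz · h_tz = 2 conj(z - a) (2z(z - a) + b²) / |w|²`, whose imaginary part is
`2 (2 |z - a|² Im z - b² Im z) / |w|²`. -/

open Complex ComplexConjugate

theorem sub_mul_sub_conj_eq (z α : ℂ) :
    (z - α) * (z - conj α) = (z - α.re) ^ 2 + (α.im : ℂ) ^ 2 := by
  conv_lhs => rw [← re_add_im α]
  simp only [map_add, map_mul, conj_ofReal, conj_I]
  linear_combination (-(α.im : ℂ) ^ 2) * I_sq

theorem conj_div_mul_div (p q w : ℂ) :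
    conj (p / w) * (q / w) = conj p * q / ((‖w‖ ^ 2 : ℝ) : ℂ) := by
  rw [map_div₀, div_mul_div_comm, ofReal_pow, ← conj_mul']

theorem im_conj_hxz_mul_htz_general (a b : ℝ) (z w : ℂ)
    (hw2 : w ^ 2 = (z - (a + b * I)) * (z - (starRingEnd ℂ) (a + b * I))) :
    (((starRingEnd ℂ) (-(z - (a : ℂ)) / w)) *
        (-2 * (z ^ 2 - (a : ℂ) ^ 2) / w - 2 * w)).im =
      2 * z.im * (2 * ‖z - (a : ℂ)‖^2 - b ^ 2) / ‖w‖^2 := by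
  set u := z - (a : ℂ)
  have hR₀ : w ^ 2 = u ^ 2 + (b : ℂ) ^ 2 := by
    simpa using hw2.trans (sub_mul_sub_conj_eq z (a + b * I))
  -- `w = w * w / w` holds also at `w = 0`, where `0 / 0 = 0`.
  have htz : -2 * (z ^ 2 - (a : ℂ) ^ 2) / w - 2 * w = -2 * (2 * z * u + (b : ℂ) ^ 2) / w := by
    nth_rewrite 2 [← mul_self_div_self w]
    rw [← sq, hR₀]
    ring
  have hnum : conj (-u) * (-2 * (2 * z * u + (b : ℂ) ^ 2))
      = ((2 * (2 * ‖u‖ ^ 2) : ℝ) : ℂ) * z + ((2 * b ^ 2 : ℝ) : ℂ) * conj u := by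
    rw [map_neg]
    push_cast
    linear_combination (4 * z) * conj_mul' u
  rw [htz, conj_div_mul_div, div_ofReal_im, hnum]
  simp only [add_im, im_ofReal_mul, conj_im, u, sub_im, ofReal_im, sub_zero]
  ring

/-- Formula (4.15) of the paper: with `α = a + ib`, `w` a branch of
`R₀(z) = √((z−α)(z−conj α))`, `h_{xz} = −(z−a)/w`, `h_{tz} = −2(z²−a²)/w − 2w`, one has
`Im(conj(h_{xz})·h_{tz}) = 2·Im z·(2|z−a|² − b²)/|w|²`. -/
theorem im_conj_hxz_mul_htz (a b : ℝ) (z w : ℂ)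
    (hw : w ≠ 0) (hw2 : w ^ 2 = (z - (a + b * I)) * (z - (starRingEnd ℂ) (a + b * I))) :
    (((starRingEnd ℂ) (-(z - (a : ℂ)) / w)) *
        (-2 * (z ^ 2 - (a : ℂ) ^ 2) / w - 2 * w)).im =
      2 * z.im * (2 * ‖z - (a : ℂ)‖^2 - b ^ 2) / ‖w‖^2 :=
  im_conj_hxz_mul_htz_general a b z w hw2
end

section
/- Let a and b be real numbers, α = a + i·b, and let z = u + i·v be a complex number satisfying 2·|z − a|² = b². Let w be a complex number with w ≠ 0 and w² = (z − α)(z − conj(α)). Define h_x = −w, h_t = −2(z + a)·w, h_{xz} = −(z − a)/w, and h_{tz} = −2(z² − a²)/w − 2w. Then Im(h_x)·h_{tz} − Im(h_t)·h_{xz} = (2(z − a)/w)·( 3(u − a)·Im w − v·Re w ). -/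
/-!
Put `s = z − a`. The radicand is `s² + b²`, and on the circle `b² = 2‖s‖² = 2 s s̄`, so
`w² = s (s + 2 s̄) = s (3(u − a) − i v)`. Substituting this for `w²` in the term `2 w Im w`
of the determinant (after clearing the denominator `w`) leaves an identity that is polynomial
in `u`, `v`, `Re w`, `Im w`.
-/

open Complex

theorem sub_mul_sub_conj_eq_s5 (a b : ℝ) (z : ℂ) :
    (z - (a + b * I)) * (z - (starRingEnd ℂ) (a + b * I)) = (z - a) ^ 2 + (b : ℂ) ^ 2 := by
  simp only [map_add, map_mul, conj_ofReal, conj_I]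
  linear_combination -(b : ℂ) ^ 2 * I_sq

theorem sq_add_sq_eq_mul_of_two_norm_sq_eq {s : ℂ} {b : ℝ} (h : 2 * ‖s‖ ^ 2 = b ^ 2) :
    s ^ 2 + (b : ℂ) ^ 2 = s * (3 * s.re - s.im * I) := by
  have hb : (b : ℂ) ^ 2 = 2 * (s * (starRingEnd ℂ) s) := by
    rw [mul_conj, normSq_eq_norm_sq, ← ofReal_pow, ← h]
    push_cast
    ring
  have hre := add_conj s
  have him := sub_conj s
  push_cast at hre him
  rw [hb]
  linear_combination s * (3 / 2 * hre - 1 / 2 * him)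

theorem genus_zero_determinant_eq_of_sq_eq (a : ℝ) (z w : ℂ) (hw : w ≠ 0)
    (hw2 : w ^ 2 = (z - a) * (3 * (z.re - a) - z.im * I)) :
    (((-w).im : ℂ)) * (-2 * (z ^ 2 - (a : ℂ) ^ 2) / w - 2 * w) -
        (((-2 * (z + (a : ℂ)) * w).im : ℂ)) * (-(z - (a : ℂ)) / w) =
      (2 * (z - (a : ℂ)) / w) * ((3 * (z.re - a) * w.im - z.im * w.re : ℝ) : ℂ) := by
  simp only [neg_im, mul_im, mul_re, add_re, add_im, ofReal_re, ofReal_im, neg_re, re_ofNat,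
    im_ofNat]
  field_simp
  rw [hw2]
  obtain ⟨u, v, rfl⟩ : ∃ u v : ℝ, z = u + v * I := ⟨z.re, z.im, (re_add_im z).symm⟩
  simp only [add_re, add_im, mul_re, mul_im, ofReal_re, ofReal_im, I_re, I_im]
  push_cast
  ring

/-- Formulas (4.17)–(4.18) of the paper: on the circle `|z − a| = b/√2`, the determinant
with rows `(Im h_x, Im h_t)` and `(h_{xz}, h_{tz})` (genus-zero phase function) reduces to
`(2(z−a)/w)·(3(u−a)·Im w − v·Re w)`, where `u = Re z`, `v = Im z`. -/
theorem genus_zero_determinant_reduction (a b : ℝ) (z w : ℂ)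
    (hc : 2 * ‖z - (a : ℂ)‖^2 = b ^ 2)
    (hw : w ≠ 0) (hw2 : w ^ 2 = (z - (a + b * I)) * (z - (starRingEnd ℂ) (a + b * I))) :
    (((-w).im : ℂ)) * (-2 * (z ^ 2 - (a : ℂ) ^ 2) / w - 2 * w) -
        (((-2 * (z + (a : ℂ)) * w).im : ℂ)) * (-(z - (a : ℂ)) / w) =
      (2 * (z - (a : ℂ)) / w) * ((3 * (z.re - a) * w.im - z.im * w.re : ℝ) : ℂ) := by
  have hw2' : w ^ 2 = (z - a) * (3 * (z.re - a) - z.im * I) := by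
    rw [hw2, sub_mul_sub_conj_eq_s5, sq_add_sq_eq_mul_of_two_norm_sq_eq hc]
    simp
  exact genus_zero_determinant_eq_of_sq_eq a z w hw hw2'
end

section
/- The function f(θ) = θ − 3·arctan( tan(θ)/3 ) is strictly decreasing on the open interval (π/2, π), and π < f(θ) < 2π for every θ ∈ (π/2, π). -/
open Real Set

/-!
The derivative of `θ - a·arctan(tan θ / a)` is `(1 - a²) tan²θ / (a² + tan²θ)`, negative for
`a = 3` off the zeros of `tan`. For the bounds, write `θ = 3c + π` resp. `θ = 3c + 2π`, so that
`tan θ = tan 3c` and `arctan (tan c) = c`; then everything reduces to the sign of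
`tan 3c / 3 - tan c = 8 sin³c / (3 cos 3c)`.
-/

theorem hasDerivAt_sub_mul_arctan_tan_div {a θ : ℝ} (ha : a ≠ 0) (hθ : cos θ ≠ 0) :
    HasDerivAt (fun x : ℝ => x - a * arctan (tan x / a))
      ((1 - a ^ 2) * tan θ ^ 2 / (a ^ 2 + tan θ ^ 2)) θ := by
  have h := (hasDerivAt_id θ).sub
    (((hasDerivAt_arctan _).comp θ ((hasDerivAt_tan hθ).div_const a)).const_mul a)
  refine h.congr_deriv ?_
  have hsec : 1 / cos θ ^ 2 = 1 + tan θ ^ 2 := by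
    rw [← inv_one_add_tan_sq hθ, one_div, inv_inv]
  rw [hsec]
  field_simp
  ring

theorem tan_three_mul_div_three_sub_tan {c : ℝ} (hc : cos c ≠ 0) (h3c : cos (3 * c) ≠ 0) :
    tan (3 * c) / 3 - tan c = 8 * sin c ^ 3 / (3 * cos (3 * c)) := by
  rw [tan_eq_sin_div_cos, tan_eq_sin_div_cos]
  field_simp
  rw [sin_three_mul, cos_three_mul]
  linear_combination (-12 * sin c * cos c) * sin_sq_add_cos_sq c

theorem tan_three_mul_div_three_lt_tan {c : ℝ} (hc : c ∈ Ioo (-(π / 6)) 0) :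
    tan (3 * c) / 3 < tan c := by
  obtain ⟨hc₁, hc₂⟩ := hc
  have hsin : sin c < 0 := sin_neg_of_neg_of_neg_pi_lt hc₂ (by linarith [pi_pos])
  have hcos : 0 < cos c := cos_pos_of_mem_Ioo ⟨by linarith [pi_pos], by linarith [pi_pos]⟩
  have hcos3 : 0 < cos (3 * c) := cos_pos_of_mem_Ioo ⟨by linarith, by linarith [pi_pos]⟩
  have : 8 * sin c ^ 3 / (3 * cos (3 * c)) < 0 :=
    div_neg_of_neg_of_pos (by nlinarith [pow_pos (neg_pos.2 hsin) 3]) (by positivity)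
  linarith [tan_three_mul_div_three_sub_tan hcos.ne' hcos3.ne']

theorem tan_lt_tan_three_mul_div_three {c : ℝ} (hc : c ∈ Ioo (-(π / 2)) (-(π / 3))) :
    tan c < tan (3 * c) / 3 := by
  obtain ⟨hc₁, hc₂⟩ := hc
  have hsin : sin c < 0 := sin_neg_of_neg_of_neg_pi_lt (by linarith [pi_pos]) (by linarith)
  have hcos : 0 < cos c := cos_pos_of_mem_Ioo ⟨hc₁, by linarith [pi_pos]⟩
  have hcos3 : cos (3 * c) < 0 := by
    rw [← cos_add_two_pi]
    exact cos_neg_of_pi_div_two_lt_of_lt (by linarith) (by linarith)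
  have : 0 < 8 * sin c ^ 3 / (3 * cos (3 * c)) :=
    div_pos_of_neg_of_neg (by nlinarith [pow_pos (neg_pos.2 hsin) 3]) (by linarith)
  linarith [tan_three_mul_div_three_sub_tan hcos.ne' hcos3.ne]

theorem arctan_tan_div_three_lt {θ : ℝ} (hθ : θ ∈ Ioo (π / 2) π) :
    arctan (tan θ / 3) < (θ - π) / 3 := by
  obtain ⟨hθ₁, hθ₂⟩ := hθ
  have hc : (θ - π) / 3 ∈ Ioo (-(π / 6)) 0 := ⟨by linarith, by linarith⟩
  calc arctan (tan θ / 3) = arctan (tan (3 * ((θ - π) / 3)) / 3) := by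
        rw [mul_div_cancel₀ _ three_ne_zero, tan_sub_pi]
    _ < arctan (tan ((θ - π) / 3)) := arctan_strictMono (tan_three_mul_div_three_lt_tan hc)
    _ = (θ - π) / 3 := arctan_tan (by linarith [hc.1, pi_pos]) (by linarith [hc.2, pi_pos])

theorem lt_arctan_tan_div_three {θ : ℝ} (hθ : θ ∈ Ioo (π / 2) π) :
    (θ - 2 * π) / 3 < arctan (tan θ / 3) := by
  obtain ⟨hθ₁, hθ₂⟩ := hθ
  have hc : (θ - 2 * π) / 3 ∈ Ioo (-(π / 2)) (-(π / 3)) := ⟨by linarith, by linarith⟩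
  calc (θ - 2 * π) / 3 = arctan (tan ((θ - 2 * π) / 3)) :=
        (arctan_tan hc.1 (by linarith [hc.2, pi_pos])).symm
    _ < arctan (tan (3 * ((θ - 2 * π) / 3)) / 3) :=
        arctan_strictMono (tan_lt_tan_three_mul_div_three hc)
    _ = arctan (tan θ / 3) := by
        rw [mul_div_cancel₀ _ three_ne_zero, show θ - 2 * π = θ - π - π by ring, tan_sub_pi,
          tan_sub_pi]

/-- Monotonicity and bounds for `φ(θ) = θ − 3·arctan(tan θ / 3)` on `(π/2, π)`
(formula (4.22) of the paper, branch with 3π subtracted). -/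
theorem phi_strictAnti_and_bounds_second :
    StrictAntiOn (fun θ : ℝ => θ - 3 * Real.arctan (Real.tan θ / 3))
      (Set.Ioo (π / 2) π) ∧
    ∀ θ ∈ Set.Ioo (π / 2) π,
      π < θ - 3 * Real.arctan (Real.tan θ / 3) ∧
      θ - 3 * Real.arctan (Real.tan θ / 3) < 2 * π := by
  have hderiv (θ : ℝ) (hθ : θ ∈ Ioo (π / 2) π) :=
    hasDerivAt_sub_mul_arctan_tan_div three_ne_zero
      (cos_neg_of_pi_div_two_lt_of_lt hθ.1 (by linarith [hθ.2, pi_pos])).ne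
  have htan (θ : ℝ) (hθ : θ ∈ Ioo (π / 2) π) : tan θ < 0 := by
    rw [← tan_sub_pi]
    exact tan_neg_of_neg_of_pi_div_two_lt (by linarith [hθ.2]) (by linarith [hθ.1])
  refine ⟨?_, fun θ hθ => ⟨by linarith [arctan_tan_div_three_lt hθ],
    by linarith [lt_arctan_tan_div_three hθ]⟩⟩
  apply strictAntiOn_of_hasDerivWithinAt_neg (convex_Ioo _ _)
    (f' := fun θ => (1 - 3 ^ 2) * tan θ ^ 2 / (3 ^ 2 + tan θ ^ 2))
    (fun θ hθ => (hderiv θ hθ).continuousAt.continuousWithinAt) <;> rw [interior_Ioo]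
  · exact fun θ hθ => (hderiv θ hθ).hasDerivWithinAt
  · exact fun θ hθ => div_neg_of_neg_of_pos (by nlinarith [htan θ hθ]) (by positivity)
end

section
/- For every real number s and every real number v with v > 0, the complex number (s + i·v)·(3s − i·v)³ is not a nonnegative real number; that is, either its imaginary part is nonzero, or its real part is strictly negative. -/
open Complex

/-! Expanding, `(s + iv)(3s − iv)³ = (27s⁴ + 18s²v² − v⁴) − 8sv³·i`. For `v ≠ 0` the imaginary part
vanishes only when `s = 0`, and then the real part is `−v⁴ < 0`. -/

theorem re_add_mul_I_mul_sub_mul_I_pow_three (s v : ℝ) :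
    (((s : ℂ) + v * I) * (3 * s - v * I) ^ 3).re = 27 * s ^ 4 + 18 * s ^ 2 * v ^ 2 - v ^ 4 := by
  simp only [pow_succ, pow_zero, one_mul, mul_re, mul_im, add_re, add_im, sub_re, sub_im,
    ofReal_re, ofReal_im, I_re, I_im, re_ofNat, im_ofNat]
  ring

theorem im_add_mul_I_mul_sub_mul_I_pow_three (s v : ℝ) :
    (((s : ℂ) + v * I) * (3 * s - v * I) ^ 3).im = -(8 * s * v ^ 3) := by
  simp only [pow_succ, pow_zero, one_mul, mul_re, mul_im, add_re, add_im, sub_re, sub_im,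
    ofReal_re, ofReal_im, I_re, I_im, re_ofNat, im_ofNat]
  ring

/-- Branch-free reformulation of inequality (4.21)–(4.22) of the paper: for `v > 0`,
the complex number `(s + iv)(3s − iv)³` is never a nonnegative real number. -/
theorem key_arg_inequality (s v : ℝ) (hv : 0 < v) :
    (((s : ℂ) + v * I) * (3 * s - v * I) ^ 3).im ≠ 0 ∨
    (((s : ℂ) + v * I) * (3 * s - v * I) ^ 3).re < 0 := by
  rw [re_add_mul_I_mul_sub_mul_I_pow_three, im_add_mul_I_mul_sub_mul_I_pow_three]
  rcases eq_or_ne s 0 with rfl | hs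
  · right
    have : 0 < v ^ 4 := by positivity
    linarith
  · left
    exact neg_ne_zero.mpr (mul_ne_zero (mul_ne_zero (by norm_num) hs) (pow_ne_zero 3 hv.ne'))
end
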